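/- Let C ≥ 1, A ≥ 1, and let (M_k)_{k∈ℕ₀} be a sequence of nonnegative real numbers satisfying M_{k+1} ≤ C A^k k! + C k Σ_{l=0}^{k} C(k,l) M_{k−l} A^l l! for all k ∈ ℕ₀, where C(k,l) is the binomial coefficient. Then there exist constants C_u < ∞ and A_u < ∞ such that M_k ≤ C_u A_u^k k! for all k ∈ ℕ₀. -/

import Mathlib

/-!
Induction on `k` with `C_u = max (M 0) 1` and `A_u = A + C`. Inserting the bound for `M_{k-l}`
into the recursion, `C(k,l) (k-l)! l! = k!` collapses the convolution to
`C_u k! Σ_l A_u^{k-l} A^l`, and since `A_u - A = C` the geometric sum gives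
`C Σ_l A_u^{k-l} A^l = A_u^{k+1} - A^{k+1} ≤ A_u^{k+1}`. Hence
`M_{k+1} ≤ C_u A_u^{k+1} k! + k C_u A_u^{k+1} k! = C_u A_u^{k+1} (k+1)!`.
-/

open Finset Nat

theorem sum_choose_mul_le_factorial_mul_geom_sum₂ {A B D : ℝ} (hA : 0 ≤ A)
    {M : ℕ → ℝ} {n : ℕ} (hM : ∀ j ≤ n, M j ≤ B * D ^ j * j !) :
    ∑ l ∈ range (n + 1), (n.choose l : ℝ) * M (n - l) * A ^ l * l ! ≤
      B * n ! * ∑ l ∈ range (n + 1), A ^ l * D ^ (n - l) := by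
  rw [mul_sum]
  refine sum_le_sum fun l hl => ?_
  have hln : l ≤ n := Nat.lt_succ_iff.mp (mem_range.mp hl)
  have hfact : (n.choose l : ℝ) * l ! * (n - l)! = n ! := by
    exact_mod_cast choose_mul_factorial_mul_factorial hln
  calc (n.choose l : ℝ) * M (n - l) * A ^ l * l !
      ≤ (n.choose l : ℝ) * (B * D ^ (n - l) * (n - l)!) * A ^ l * l ! := by
        gcongr
        exact hM _ (n.sub_le l)
    _ = B * ((n.choose l : ℝ) * l ! * (n - l)!) * (A ^ l * D ^ (n - l)) := by ring
    _ = B * n ! * (A ^ l * D ^ (n - l)) := by rw [hfact]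

theorem le_mul_add_pow_mul_factorial_of_recursion {A C B : ℝ} (hA : 0 ≤ A) (hC : 0 ≤ C)
    (hB : 1 ≤ B) {M : ℕ → ℝ} (hM₀ : M 0 ≤ B)
    (hrec : ∀ k : ℕ, M (k + 1) ≤ C * A ^ k * k ! +
      C * k * ∑ l ∈ range (k + 1), (k.choose l : ℝ) * M (k - l) * A ^ l * l !)
    (k : ℕ) : M k ≤ B * (A + C) ^ k * k ! := by
  induction k using Nat.strong_induction_on with
  | _ k ih =>
  rcases k with _ | n
  · simpa using hM₀
  have hgeom : C * ∑ l ∈ range (n + 1), A ^ l * (A + C) ^ (n - l) =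
      (A + C) ^ (n + 1) - A ^ (n + 1) := by
    simpa using (Commute.all A (A + C)).mul_neg_geom_sum₂ (n + 1)
  have hfirst : C * A ^ n ≤ B * (A + C) ^ (n + 1) :=
    calc C * A ^ n ≤ (A + C) * (A + C) ^ n := by gcongr <;> linarith
      _ = 1 * (A + C) ^ (n + 1) := by ring
      _ ≤ B * (A + C) ^ (n + 1) := by gcongr
  calc M (n + 1)
      ≤ C * A ^ n * n ! +
          C * n * (B * n ! * ∑ l ∈ range (n + 1), A ^ l * (A + C) ^ (n - l)) := by
        refine (hrec n).trans ?_
        gcongr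
        exact sum_choose_mul_le_factorial_mul_geom_sum₂ hA fun j hj => ih j (by omega)
    _ = C * A ^ n * n ! + n * B * n ! * ((A + C) ^ (n + 1) - A ^ (n + 1)) := by
        rw [← hgeom]; ring
    _ ≤ B * (A + C) ^ (n + 1) * n ! + n * B * n ! * (A + C) ^ (n + 1) := by
        gcongr
        exact sub_le_self _ (by positivity)
    _ = B * (A + C) ^ (n + 1) * (n + 1)! := by
        push_cast [factorial_succ]
        ring

theorem majorant_conclusion_general (C A : ℝ) (hC : 1 ≤ C) (hA : 1 ≤ A) (M : ℕ → ℝ)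
    (hrec : ∀ k : ℕ, M (k + 1) ≤
      C * A ^ k * (Nat.factorial k : ℝ) +
        C * (k : ℝ) * ∑ l ∈ Finset.range (k + 1),
          (Nat.choose k l : ℝ) * M (k - l) * A ^ l * (Nat.factorial l : ℝ)) :
    ∃ Cu Au : ℝ, ∀ k : ℕ, M k ≤ Cu * Au ^ k * (Nat.factorial k : ℝ) :=
  ⟨max (M 0) 1, A + C, le_mul_add_pow_mul_factorial_of_recursion (by linarith) (by linarith)
    (le_max_right _ _) (le_max_left _ _) hrec⟩

/-- Cauchy's method of majorants, conclusion step. If `C ≥ 1`, `A ≥ 1`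
and a sequence of nonnegative reals `(M_k)` satisfies
`M_{k+1} ≤ C A^k k! + C k Σ_{l=0}^{k} (k choose l) M_{k−l} A^l l!` for all `k ∈ ℕ₀`,
then there exist constants `C_u, A_u < ∞` with `M_k ≤ C_u A_u^k k!` for all `k`. -/
theorem majorant_conclusion (C A : ℝ) (hC : 1 ≤ C) (hA : 1 ≤ A) (M : ℕ → ℝ)
    (hM : ∀ k, 0 ≤ M k)
    (hrec : ∀ k : ℕ, M (k + 1) ≤
      C * A ^ k * (Nat.factorial k : ℝ) +
        C * (k : ℝ) * ∑ l ∈ Finset.range (k + 1),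
          (Nat.choose k l : ℝ) * M (k - l) * A ^ l * (Nat.factorial l : ℝ)) :
    ∃ Cu Au : ℝ, ∀ k : ℕ, M k ≤ Cu * Au ^ k * (Nat.factorial k : ℝ) :=
  majorant_conclusion_general C A hC hA M hrec
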